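/- arXiv:1004.3163 — 3 statements merged into one kernel-verified Lean document; each statement's English description precedes it below -/
import Mathlib

section
/- The multiplication (z,p)·(z',p') = (z, p + ((1+|z'|²)/(1+|z|²))·p'), defined when z' = z + (1+|z|²)·p̄, together with source l(z,p) = z and target r(z,p) = z + (1+|z|²)·p̄, units (z,0), and inverse (z,p)⁻¹ = (z+(1+|z|²)p̄, -((1+|z|²)/(1+|z+(1+|z|²)p̄|²))·p), satisfies the groupoid axioms on ℂ×ℂ: associativity, unit laws, and inverse laws. -/
open Complex

noncomputable section

/-- Source map `l(z,p) = z`. -/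
def src (γ : ℂ × ℂ) : ℂ := γ.1

/-- Target map `r(z,p) = z + (1+|z|²)·p̄`. -/
def tgt (γ : ℂ × ℂ) : ℂ := γ.1 + (1 + (normSq γ.1 : ℂ)) * (starRingEnd ℂ) γ.2

/-- `(z,p)` and `(z',p')` are composable iff `z' = z + (1+|z|²)·p̄`. -/
def Comp (γ γ' : ℂ × ℂ) : Prop := γ'.1 = tgt γ

/-- Multiplication `(z,p)·(z',p') = (z, p + ((1+|z'|²)/(1+|z|²))·p')`. -/
def gmul (γ γ' : ℂ × ℂ) : ℂ × ℂ :=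
  (γ.1, γ.2 + ((1 + (normSq γ'.1 : ℂ)) / (1 + (normSq γ.1 : ℂ))) * γ'.2)

/-- Inverse `(z,p)⁻¹ = (z+(1+|z|²)p̄, -((1+|z|²)/(1+|z+(1+|z|²)p̄|²))·p)`. -/
def ginv (γ : ℂ × ℂ) : ℂ × ℂ :=
  (tgt γ, -((1 + (normSq γ.1 : ℂ)) / (1 + (normSq (tgt γ) : ℂ))) * γ.2)

lemma key (z : ℂ) : (1 + (normSq z : ℂ)) ≠ 0 := by
  intro h
  have h2 := congrArg Complex.re h
  simp at h2
  nlinarith [normSq_nonneg z]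

/-- the above data satisfies the groupoid axioms on `ℂ×ℂ`: associativity
(with composability of the intermediate products), the unit laws for the units `(z,0)`,
and the inverse laws. -/
theorem stmt5 :
    (∀ a b c : ℂ × ℂ, Comp a b → Comp b c →
        Comp (gmul a b) c ∧ Comp a (gmul b c) ∧
        gmul (gmul a b) c = gmul a (gmul b c)) ∧
    (∀ a : ℂ × ℂ, Comp (src a, 0) a ∧ gmul (src a, 0) a = a ∧
        Comp a (tgt a, 0) ∧ gmul a (tgt a, 0) = a) ∧
    (∀ a : ℂ × ℂ, Comp a (ginv a) ∧ gmul a (ginv a) = (src a, 0) ∧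
        Comp (ginv a) a ∧ gmul (ginv a) a = (tgt a, 0)) := by
  refine ⟨fun a b c hab hbc => ?_, fun a => ?_, fun a => ?_⟩ <;>
    simp only [Comp, tgt, gmul, src, ginv, Prod.ext_iff, map_add, map_mul, map_neg,
      map_div₀, map_zero, map_one, Complex.conj_ofReal] at * <;>
    and_intros <;>
    first
      | rfl
      | trivial
      | (try rw [hbc]); (try rw [hab]); field_simp [key]; try ring

end
end

section
/- Let ℏ > 0 and let φ be the linear functional on the Cuntz groupoid algebra defined on basis elements by φ(e_{m,n}) = δ_{n,0} e^{-mℏ}(1-e^{-ℏ}), and let A(t) be the automorphism A(t)(e_{m,n}) = e^{itn} e_{m,n}, extended to complex t. Then φ satisfies the KMS condition at β = -ℏ on basis elements: φ(e_{m,n} * A(-iℏ)(e_{p,q})) = φ(e_{p,q} * e_{m,n}) for all valid indices (m,n), (p,q). -/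
/-- in the Cuntz groupoid algebra (basis `e_{m,n}`, `m ∈ ℕ`, `n ∈ ℤ`,
`m+n ≥ 0`, product `e_{m,n}*e_{p,q} = δ_{m+n,p} e_{m,n+q}`), the linear functional
`φ(e_{m,n}) = δ_{n,0} e^{-mℏ}(1-e^{-ℏ})` satisfies the KMS condition at `β = -ℏ` for the
automorphism group `A(t)(e_{m,n}) = e^{itn} e_{m,n}` (extended to complex time):
`φ(e_{m,n} * A(-iℏ)(e_{p,q})) = φ(e_{p,q} * e_{m,n})`. -/
theorem stmt16 {A : Type*} [Ring A] [Algebra ℂ A] (ℏ : ℝ) (hℏ : 0 < ℏ)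
    (e : ℕ → ℤ → A)
    (hmul : ∀ (m p : ℕ) (n q : ℤ), 0 ≤ (m : ℤ) + n → 0 ≤ (p : ℤ) + q →
      e m n * e p q = if (m : ℤ) + n = (p : ℤ) then e m (n + q) else 0)
    (φ : A →ₗ[ℂ] ℂ)
    (hφ : ∀ (m : ℕ) (n : ℤ), 0 ≤ (m : ℤ) + n →
      φ (e m n) = if n = 0 then ((Real.exp (-(m : ℝ) * ℏ) * (1 - Real.exp (-ℏ)) : ℝ) : ℂ)
        else 0)
    (Aut : ℂ → A →ₗ[ℂ] A)
    (hAut : ∀ (t : ℂ) (p : ℕ) (q : ℤ), 0 ≤ (p : ℤ) + q →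
      Aut t (e p q) = Complex.exp (Complex.I * t * q) • e p q) :
    ∀ (m p : ℕ) (n q : ℤ), 0 ≤ (m : ℤ) + n → 0 ≤ (p : ℤ) + q →
      φ (e m n * Aut (-Complex.I * ℏ) (e p q)) = φ (e p q * e m n) := by
  intro m p n q hmn hpq
  rw [hAut _ _ _ hpq, mul_smul_comm, map_smul, hmul _ _ _ _ hmn hpq, hmul _ _ _ _ hpq hmn,
      apply_ite φ, apply_ite φ, map_zero]
  by_cases h1 : (m:ℤ) + n = p
  · by_cases h2 : n + q = 0
    · have h3 : (p:ℤ) + q = m := by omega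
      rw [if_pos h1, if_pos h3, hφ _ _ (by omega), hφ _ _ (by omega), if_pos h2,
          if_pos (show q + n = 0 by omega)]
      have hq : (q:ℂ) = (m:ℂ) - p := by
        have h : q = (m:ℤ) - p := by omega
        rw [h]; push_cast; ring
      rw [smul_eq_mul, hq]
      have harg : Complex.I * (-Complex.I * (ℏ:ℂ)) * ((m:ℂ) - p) = ((ℏ * ((m:ℝ) - p) : ℝ) : ℂ) := by
        push_cast; ring_nf; rw [Complex.I_sq]; ring
      rw [harg, ← Complex.ofReal_exp, ← Complex.ofReal_mul]
      rw [Complex.ofReal_inj, ← mul_assoc, ← Real.exp_add]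
      congr 1
      push_cast
      ring
    · have h3 : ¬ (q + n = 0) := by omega
      rw [if_pos h1, hφ _ _ (by omega), if_neg h2, smul_zero]
      by_cases h4 : (p:ℤ) + q = m
      · rw [if_pos h4, hφ _ _ (by omega), if_neg h3]
      · rw [if_neg h4]
  · by_cases h4 : (p:ℤ) + q = m
    · rw [if_neg h1, if_pos h4, hφ _ _ (by omega), if_neg (show ¬ q + n = 0 by omega), smul_zero]
    · rw [if_neg h1, if_neg h4, smul_zero]
end

section
/- For σ_{m,n}(x,y) = x̄^m y^n exp((Li₂(-|x|²)+Li₂(-|y|²))/(2ℏ)) on ℂ², with the inner product ⟨σ₁,σ₂⟩ = ∫_{ℂ²} d²x d²y · σ̄₁σ₂ / (√(1+|x|²)√(1+|y|²)), the states σ_{m,n} are pairwise orthogonal (for (m,n) ≠ (m',n')) and have finite norm ‖σ_{m,n}‖² = A_m A_n, where A_m = 2π ∫₀^∞ t^m (1+t)^{-1/2} e^{Li₂(-t)/ℏ} dt < ∞. -/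
open Complex MeasureTheory
open scoped ENNReal

noncomputable section

/-- The real dilogarithm (for arguments `s ≤ 0`):
`Li₂(s) = -∫₀^s log(1-τ)/τ dτ`. -/
def Li2 (s : ℝ) : ℝ := -∫ τ in (0:ℝ)..s, Real.log (1 - τ) / τ

/-- The polarized section `σ_{m,n}(x,y) = x̄^m y^n exp((Li₂(-|x|²)+Li₂(-|y|²))/(2ℏ))`. -/
def sg (ℏ : ℝ) (m n : ℕ) (p : ℂ × ℂ) : ℂ :=
  ((starRingEnd ℂ) p.1) ^ m * p.2 ^ n *
    Complex.exp (((Li2 (-(normSq p.1)) + Li2 (-(normSq p.2))) / (2 * ℏ) : ℝ))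

/-- The weight `1/(√(1+|x|²)√(1+|y|²))`. -/
def wt (p : ℂ × ℂ) : ℝ :=
  1 / (Real.sqrt (1 + normSq p.1) * Real.sqrt (1 + normSq p.2))

/-- The measure `d²x d²y` on `ℂ²`, where `d²x = dx dx̄/i` is twice Lebesgue measure. -/
def meas : Measure (ℂ × ℂ) := (4 : ℝ≥0∞) • (volume : Measure (ℂ × ℂ))

/-- The inner product `⟨σ_{m,n}, σ_{m',n'}⟩ = ∫_{ℂ²} d²x d²y σ̄σ'/(√(1+|x|²)√(1+|y|²))`. -/
def ip (ℏ : ℝ) (m n m' n' : ℕ) : ℂ :=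
  ∫ p : ℂ × ℂ, (starRingEnd ℂ) (sg ℏ m n p) * sg ℏ m' n' p * (wt p : ℂ) ∂meas

/-- `A_m = 2π ∫₀^∞ t^m (1+t)^{-1/2} e^{Li₂(-t)/ℏ} dt`. -/
def Acoef (ℏ : ℝ) (m : ℕ) : ℝ :=
  2 * Real.pi * ∫ t in Set.Ioi (0:ℝ), t ^ m / Real.sqrt (1 + t) * Real.exp (Li2 (-t) / ℏ)

/-!
With `w(t) = e^{Li₂(-t)/ℏ} / √(1+t)`, the integrand of `⟨σ_{m,n}, σ_{m',n'}⟩` factorises as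
`F_{m,m'}(x) F_{n',n}(y)` where `F_{a,b}(x) = x^a x̄^b w(|x|²)`. A rotation `x ↦ e^{iθ}x`
preserves Lebesgue measure and multiplies `F_{a,b}` by `e^{i(a-b)θ}`, so `∫ F_{a,b} = 0` for
`a ≠ b`; for `a = b` the function is radial, and polar coordinates with `t = |x|²` give
`∫ F_{a,a} = π ∫₀^∞ t^a w(t) dt`.

Finiteness: on `τ ≤ 0` the dilogarithm integrand `log(1-τ)/τ` lies in `[-1, 0]`, so `Li₂` is
`1`-Lipschitz and nonpositive there, while comparing with `log|τ|/τ` on `[-t, -1]` gives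
`Li₂(-t) ≤ -(log t)²/2`. Hence `e^{Li₂(-t)/ℏ}` decays faster than every power of `t`.
-/

open Set Filter
open scoped Real ComplexConjugate

lemma log_one_sub_div_nonpos {τ : ℝ} (hτ : τ ≤ 0) : Real.log (1 - τ) / τ ≤ 0 :=
  div_nonpos_of_nonneg_of_nonpos (Real.log_nonneg (by linarith)) hτ

lemma abs_log_one_sub_div_le_one {τ : ℝ} (hτ : τ ≤ 0) : |Real.log (1 - τ) / τ| ≤ 1 := by
  rw [abs_of_nonpos (log_one_sub_div_nonpos hτ), neg_le]
  rcases hτ.eq_or_lt with rfl | hτ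
  · simp
  · rw [le_div_iff_of_neg hτ]
    linarith [Real.log_le_sub_one_of_pos (x := 1 - τ) (by linarith)]

lemma intervalIntegrable_log_one_sub_div {a b : ℝ} (ha : a ≤ 0) (hb : b ≤ 0) :
    IntervalIntegrable (fun τ : ℝ => Real.log (1 - τ) / τ) volume a b := by
  refine intervalIntegrable_iff.2 (Measure.integrableOn_of_bounded (M := 1) ?_ ?_ ?_)
  · simp [uIoc, Real.volume_Ioc]
  · exact ((Real.measurable_log.comp (measurable_const.sub measurable_id)).div
      measurable_id).aestronglyMeasurable
  · filter_upwards [ae_restrict_mem measurableSet_uIoc] with τ hτ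
    exact abs_log_one_sub_div_le_one ((uIoc_subset_uIcc hτ).2.trans (max_le ha hb))

lemma Li2_eq_integral (s : ℝ) : Li2 s = ∫ τ in s..0, Real.log (1 - τ) / τ := by
  rw [Li2, intervalIntegral.integral_symm, neg_neg]

lemma Li2_nonpos {s : ℝ} (hs : s ≤ 0) : Li2 s ≤ 0 := by
  rw [Li2_eq_integral, ← neg_nonneg, ← intervalIntegral.integral_neg]
  exact intervalIntegral.integral_nonneg hs fun τ hτ => neg_nonneg.2 (log_one_sub_div_nonpos hτ.2)

lemma lipschitzOnWith_Li2 : LipschitzOnWith 1 Li2 (Iic 0) := by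
  refine LipschitzOnWith.of_dist_le_mul fun s hs s' hs' => ?_
  have hbound : ∀ τ ∈ uIoc s s', ‖Real.log (1 - τ) / τ‖ ≤ 1 := fun τ hτ =>
    abs_log_one_sub_div_le_one ((uIoc_subset_uIcc hτ).2.trans (max_le hs hs'))
  rw [Li2, Li2, dist_neg_neg, dist_comm, dist_eq_norm,
    intervalIntegral.integral_interval_sub_left (intervalIntegrable_log_one_sub_div le_rfl hs')
      (intervalIntegrable_log_one_sub_div le_rfl hs)]
  simpa [Real.dist_eq, abs_sub_comm] using intervalIntegral.norm_integral_le_of_norm_le_const hbound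

lemma uIcc_subset_Iio_zero {a b : ℝ} (ha : a < 0) (hb : b < 0) : uIcc a b ⊆ Iio 0 :=
  fun _ hτ => hτ.2.trans_lt (max_lt ha hb)

lemma intervalIntegrable_log_div_self {a b : ℝ} (ha : a < 0) (hb : b < 0) :
    IntervalIntegrable (fun τ : ℝ => Real.log τ / τ) volume a b := by
  refine ContinuousOn.intervalIntegrable fun τ hτ => ?_
  have hτ0 : τ ≠ 0 := (uIcc_subset_Iio_zero ha hb hτ).ne
  exact ((Real.continuousAt_log hτ0).div continuousAt_id hτ0).continuousWithinAt

/-- Since `Real.log τ = log |τ|`, this is the primitive of `log |τ| / τ` on the negative axis. -/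
lemma integral_log_div_self {a b : ℝ} (ha : a < 0) (hb : b < 0) :
    ∫ τ in a..b, Real.log τ / τ = Real.log b ^ 2 / 2 - Real.log a ^ 2 / 2 := by
  refine intervalIntegral.integral_eq_sub_of_hasDerivAt (f := fun τ => Real.log τ ^ 2 / 2)
    (fun τ hτ => ?_) (intervalIntegrable_log_div_self ha hb)
  have hτ0 : τ ≠ 0 := (uIcc_subset_Iio_zero ha hb hτ).ne
  refine ((((hasDerivAt_id' τ).log hτ0).fun_pow 2).div_const 2).congr_deriv ?_
  field_simp
  norm_num

lemma Li2_neg_le_neg_log_sq {t : ℝ} (ht : 1 ≤ t) : Li2 (-t) ≤ -Real.log t ^ 2 / 2 := by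
  have hcomp : ∫ τ in -t..-1, Real.log (1 - τ) / τ ≤ ∫ τ in -t..-1, Real.log τ / τ := by
    refine intervalIntegral.integral_mono_on (by linarith)
      (intervalIntegrable_log_one_sub_div (by linarith) (by norm_num)) ?_ fun τ hτ => ?_
    · exact intervalIntegrable_log_div_self (by linarith) (by norm_num)
    · have hτ0 : τ < 0 := hτ.2.trans_lt (by norm_num)
      rw [← Real.log_neg_eq_log τ]
      exact div_le_div_of_nonpos_of_le hτ0.le
        (Real.log_le_log (by linarith) (by linarith))
  have hsplit : Li2 (-t) = (∫ τ in -t..-1, Real.log (1 - τ) / τ) + Li2 (-1) := by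
    rw [Li2_eq_integral, Li2_eq_integral, intervalIntegral.integral_add_adjacent_intervals
      (intervalIntegrable_log_one_sub_div (by linarith) (by norm_num))
      (intervalIntegrable_log_one_sub_div (by norm_num) le_rfl)]
  rw [integral_log_div_self (by linarith) (by norm_num), Real.log_neg_eq_log,
    Real.log_neg_eq_log, Real.log_one] at hcomp
  linarith [Li2_nonpos (s := -1) (by norm_num)]

lemma eventually_exp_Li2_neg_div_le_rpow {ℏ : ℝ} (hℏ : 0 < ℏ) (p : ℝ) :
    ∀ᶠ t in atTop, Real.exp (Li2 (-t) / ℏ) ≤ t ^ (-p) := by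
  filter_upwards [eventually_ge_atTop 1, eventually_ge_atTop (Real.exp (2 * ℏ * p))]
    with t ht1 htp
  have hlog0 : 0 ≤ Real.log t := Real.log_nonneg ht1
  have hlogp : 2 * ℏ * p ≤ Real.log t := (Real.le_log_iff_exp_le (by linarith)).2 htp
  rw [Real.rpow_def_of_pos (by linarith), Real.exp_le_exp, div_le_iff₀ hℏ]
  nlinarith [Li2_neg_le_neg_log_sq ht1, mul_nonneg hlog0 (sub_nonneg.2 hlogp)]

def dilogWeight (ℏ t : ℝ) : ℝ := Real.exp (Li2 (-t) / ℏ) / Real.sqrt (1 + t)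

lemma pow_mul_dilogWeight (ℏ t : ℝ) (k : ℕ) :
    t ^ k * dilogWeight ℏ t = t ^ k / Real.sqrt (1 + t) * Real.exp (Li2 (-t) / ℏ) := by
  rw [dilogWeight, mul_div_assoc', div_mul_eq_mul_div, mul_div_right_comm]

lemma continuousOn_dilogWeight (ℏ : ℝ) : ContinuousOn (dilogWeight ℏ) (Ici 0) := by
  have hLi2 : ContinuousOn (fun t : ℝ => Li2 (-t)) (Ici 0) :=
    lipschitzOnWith_Li2.continuousOn.comp continuous_neg.continuousOn
      fun t (ht : 0 ≤ t) => neg_nonpos.2 ht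
  refine (Real.continuous_exp.comp_continuousOn (hLi2.div_const ℏ)).div
    (by fun_prop) fun t (ht : 0 ≤ t) => ?_
  positivity

lemma integrableOn_pow_mul_dilogWeight {ℏ : ℝ} (hℏ : 0 < ℏ) (k : ℕ) :
    IntegrableOn (fun t => t ^ k * dilogWeight ℏ t) (Ioi 0) := by
  have hcont : ContinuousOn (fun t => t ^ k * dilogWeight ℏ t) (Ici 0) :=
    (continuousOn_pow k).mul (continuousOn_dilogWeight ℏ)
  have hdecay : (fun t => t ^ k * dilogWeight ℏ t) =O[atTop] fun t => t ^ (-2 : ℝ) := by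
    refine Asymptotics.IsBigO.of_bound 1 ?_
    filter_upwards [eventually_gt_atTop 0, eventually_exp_Li2_neg_div_le_rpow hℏ (k + 2)]
      with t ht hexp
    have hsqrt : 1 ≤ Real.sqrt (1 + t) := Real.one_le_sqrt.2 (by linarith)
    rw [one_mul, Real.norm_of_nonneg (by unfold dilogWeight; positivity),
      Real.norm_of_nonneg (by positivity)]
    calc t ^ k * dilogWeight ℏ t ≤ t ^ k * Real.exp (Li2 (-t) / ℏ) := by
          gcongr; exact div_le_self (Real.exp_pos _).le hsqrt
      _ ≤ t ^ k * t ^ (-((k : ℝ) + 2)) := by gcongr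
      _ = t ^ (-2 : ℝ) := by
          rw [← Real.rpow_natCast, ← Real.rpow_add ht]
          ring_nf
  exact ((hcont.locallyIntegrableOn measurableSet_Ici).integrableOn_of_isBigO_atTop hdecay
    (integrableAtFilter_rpow_atTop_iff.2 (by norm_num))).mono_set Ioi_subset_Ici_self

section NormSq

variable {E : Type*} [NormedAddCommGroup E] [NormedSpace ℝ E]

lemma integral_comp_normSq (f : ℝ → E) :
    ∫ x : ℂ, f (normSq x) = π • ∫ t in Ioi (0 : ℝ), f t := by
  have hpolar := integral_fun_norm_addHaar (volume : Measure ℂ) (fun r => f (r ^ 2))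
  have hsubst := integral_comp_rpow_Ioi_of_pos (g := f) (p := 2) two_pos
  simp only [Complex.finrank_real_complex, ← Complex.normSq_eq_norm_sq, Nat.add_one_sub_one,
    pow_one] at hpolar
  simp only [Real.rpow_two, show (2 : ℝ) - 1 = 1 by norm_num, Real.rpow_one, mul_smul,
    integral_smul] at hsubst
  have hball : volume.real (Metric.ball (0 : ℂ) 1) = π := by
    simp [Measure.real, Complex.volume_ball]
  rw [hpolar, hball, ← hsubst]
  module

lemma integrable_comp_normSq_iff (f : ℝ → E) :
    Integrable (fun x : ℂ => f (normSq x)) ↔ IntegrableOn f (Ioi 0) := by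
  have hpolar := integrable_fun_norm_addHaar (volume : Measure ℂ) (f := fun r => f (r ^ 2))
  have hsubst := integrableOn_Ioi_comp_rpow_iff' f (p := 2) two_ne_zero
  simp only [Complex.finrank_real_complex, ← Complex.normSq_eq_norm_sq, Nat.add_one_sub_one,
    pow_one] at hpolar
  simp only [Real.rpow_two, show (2 : ℝ) - 1 = 1 by norm_num, Real.rpow_one] at hsubst
  exact hpolar.trans hsubst

end NormSq

lemma integral_pow_mul_conj_pow_mul_comp_normSq_eq_zero {a b : ℕ} (hab : a ≠ b) (g : ℝ → ℂ) :
    ∫ x : ℂ, x ^ a * conj x ^ b * g (normSq x) = 0 := by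
  set c : Circle := Circle.exp (π / ((a : ℝ) - b))
  have hc : (c : ℂ) ^ a * conj (c : ℂ) ^ b = -1 := by
    have hab' : (a : ℂ) - b ≠ 0 := sub_ne_zero.2 (Nat.cast_injective.ne hab)
    rw [Circle.coe_exp, ← Complex.exp_conj, ← Complex.exp_nat_mul, ← Complex.exp_nat_mul,
      ← Complex.exp_add, ← Complex.exp_pi_mul_I]
    congr 1
    simp only [map_mul, conj_ofReal, conj_I]
    push_cast
    field_simp
    ring
  have hrot : ∀ x : ℂ, (c * x) ^ a * conj (c * x) ^ b * g (normSq (c * x))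
      = -(x ^ a * conj x ^ b * g (normSq x)) := fun x => by
    rw [normSq_mul, Circle.normSq_coe, one_mul, map_mul, mul_pow, mul_pow, ← neg_one_mul, ← hc]
    ring
  have hinv := ((rotation c).measurePreserving).integral_comp
    (rotation c).toHomeomorph.measurableEmbedding fun x => x ^ a * conj x ^ b * g (normSq x)
  simp only [rotation_apply, hrot, integral_neg] at hinv
  exact self_eq_neg.1 hinv.symm

def weightedMonomial (ℏ : ℝ) (a b : ℕ) (x : ℂ) : ℂ :=
  x ^ a * conj x ^ b * dilogWeight ℏ (normSq x)

lemma weightedMonomial_self (ℏ : ℝ) (a : ℕ) (x : ℂ) :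
    weightedMonomial ℏ a a x = ((normSq x ^ a * dilogWeight ℏ (normSq x) : ℝ) : ℂ) := by
  rw [weightedMonomial, ← mul_pow, mul_conj]
  push_cast
  ring

lemma integral_weightedMonomial_self (ℏ : ℝ) (a : ℕ) :
    ∫ x, weightedMonomial ℏ a a x = ((π * ∫ t in Ioi 0, t ^ a * dilogWeight ℏ t : ℝ) : ℂ) := by
  simp only [weightedMonomial_self]
  rw [integral_comp_normSq (fun t => ((t ^ a * dilogWeight ℏ t : ℝ) : ℂ)),
    integral_complex_ofReal, real_smul, ofReal_mul]

lemma integrable_weightedMonomial_self {ℏ : ℝ} (hℏ : 0 < ℏ) (a : ℕ) :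
    Integrable (weightedMonomial ℏ a a) := by
  simp only [funext (weightedMonomial_self ℏ a)]
  exact (integrable_comp_normSq_iff fun t => ((t ^ a * dilogWeight ℏ t : ℝ) : ℂ)).2
    (integrableOn_pow_mul_dilogWeight hℏ a).ofReal

lemma integral_weightedMonomial_of_ne (ℏ : ℝ) {a b : ℕ} (hab : a ≠ b) :
    ∫ x, weightedMonomial ℏ a b x = 0 :=
  integral_pow_mul_conj_pow_mul_comp_normSq_eq_zero hab fun t => (dilogWeight ℏ t : ℂ)

lemma conj_sg_mul_sg_mul_wt (ℏ : ℝ) (m n m' n' : ℕ) (p : ℂ × ℂ) :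
    conj (sg ℏ m n p) * sg ℏ m' n' p * (wt p : ℂ)
      = weightedMonomial ℏ m m' p.1 * weightedMonomial ℏ n' n p.2 := by
  have hexp : ∀ A B : ℂ, cexp ((A + B) / (2 * ℏ)) ^ 2 = cexp (A / ℏ) * cexp (B / ℏ) := by
    intro A B
    rw [sq, ← Complex.exp_add, ← Complex.exp_add]
    ring_nf
  simp only [sg, wt, weightedMonomial, dilogWeight, map_mul, map_pow, conj_conj, ← ofReal_exp,
    conj_ofReal]
  push_cast
  linear_combination (p.1 ^ m * conj p.1 ^ m' * p.2 ^ n' * conj p.2 ^ n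
    / (Real.sqrt (1 + normSq p.1) * Real.sqrt (1 + normSq p.2)))
    * hexp (Li2 (-normSq p.1)) (Li2 (-normSq p.2))

lemma ip_eq_mul_integral_weightedMonomial (ℏ : ℝ) (m n m' n' : ℕ) :
    ip ℏ m n m' n'
      = 4 * ((∫ x, weightedMonomial ℏ m m' x) * ∫ y, weightedMonomial ℏ n' n y) := by
  rw [ip, meas, integral_smul_measure]
  simp only [conj_sg_mul_sg_mul_wt]
  rw [Measure.volume_eq_prod, integral_prod_mul]
  simp [real_smul]

/-- the states `σ_{m,n}` are pairwise orthogonal and have finite norm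
`‖σ_{m,n}‖² = A_m A_n`, with `A_m < ∞`. -/
theorem stmt17 (ℏ : ℝ) (hℏ : 0 < ℏ) (m n m' n' : ℕ) :
    ((m, n) ≠ (m', n') → ip ℏ m n m' n' = 0) ∧
    IntegrableOn (fun t : ℝ => t ^ m / Real.sqrt (1 + t) * Real.exp (Li2 (-t) / ℏ))
      (Set.Ioi 0) ∧
    Integrable (fun p : ℂ × ℂ => (starRingEnd ℂ) (sg ℏ m n p) * sg ℏ m n p * (wt p : ℂ))
      meas ∧
    ip ℏ m n m n = ((Acoef ℏ m * Acoef ℏ n : ℝ) : ℂ) := by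
  have hA : ∀ k, Acoef ℏ k = 2 * π * ∫ t in Ioi 0, t ^ k * dilogWeight ℏ t := fun k => by
    simp only [Acoef, pow_mul_dilogWeight]
  refine ⟨fun hne => ?_, ?_, ?_, ?_⟩
  · rw [ip_eq_mul_integral_weightedMonomial]
    rcases eq_or_ne m m' with rfl | hm
    · have hn : n' ≠ n := fun h => hne (by rw [h])
      rw [integral_weightedMonomial_of_ne ℏ hn, mul_zero, mul_zero]
    · rw [integral_weightedMonomial_of_ne ℏ hm, zero_mul, mul_zero]
  · simpa only [pow_mul_dilogWeight] using integrableOn_pow_mul_dilogWeight hℏ m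
  · simp only [conj_sg_mul_sg_mul_wt]
    exact ((integrable_weightedMonomial_self hℏ m).mul_prod
      (integrable_weightedMonomial_self hℏ n)).smul_measure (by norm_num)
  · rw [ip_eq_mul_integral_weightedMonomial, integral_weightedMonomial_self,
      integral_weightedMonomial_self, hA, hA]
    push_cast
    ring

end
end
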